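/- arXiv:2011.03473 — 4 statements merged into one kernel-verified Lean document; each statement's English description precedes it below -/
import Mathlib

section
/- Let Λ be an ℝ-linear map on n×n complex matrices that sends Hermitian matrices to Hermitian matrices, and let Λ* be a trace adjoint of Λ. Let ρ, σ be Hermitian matrices and let B be a real-valued function on pairs of Hermitian matrices such that: (a) for all Hermitian M₁, M₂ in some neighborhood of 0, B(ρ+M₁, σ+M₂) ≥ B(Λ(ρ+M₁), Λ(σ+M₂)); (b) the map X ↦ B(X, σ) on the real vector space of Hermitian matrices is Fréchet differentiable at ρ with derivative M ↦ tr(G·M) for a Hermitian matrix G, and the map X ↦ B(X, Λ(σ)) is Fréchet differentiable at Λ(ρ) with derivative M ↦ tr(G'·M) for a Hermitian matrix G'; and (c) B(ρ,σ) = B(Λ(ρ),Λ(σ)). Then G = Λ*(G'). -/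
open Matrix Filter Topology ComplexStarModule

attribute [local instance] Matrix.frobeniusNormedAddCommGroup Matrix.frobeniusNormedSpace

/-!
Along the Hermitian perturbations `X` of `ρ` (keeping `σ` fixed), the DPI and its saturation say
that `X ↦ B(X, σ) - B(Λ X, Λ σ)` has a local minimum at `ρ`, so its derivative vanishes:
`tr(G M) = tr(G' Λ(M)) = tr(Λ*(G') M)` for every Hermitian `M`. Both sides are a priori only
equal in real part, but `tr(G M)` and `tr(G' Λ(M))` are real, being traces of products of two
Hermitian matrices. Since Hermitian matrices span all matrices over `ℂ`, this forces `G = Λ*(G')`.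
-/

theorem HasFDerivAt.eq_comp_of_eventually_le_of_eq {E F : Type*}
    [NormedAddCommGroup E] [NormedSpace ℝ E] [NormedAddCommGroup F] [NormedSpace ℝ F]
    {f : E → ℝ} {g : F → ℝ} {φ : E → F} {f' : E →L[ℝ] ℝ} {g' : F →L[ℝ] ℝ} {φ' : E →L[ℝ] F}
    {x : E} (hf : HasFDerivAt f f' x) (hg : HasFDerivAt g g' (φ x)) (hφ : HasFDerivAt φ φ' x)
    (hle : ∀ᶠ y in 𝓝 x, g (φ y) ≤ f y) (heq : f x = g (φ x)) :
    f' = g'.comp φ' := by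
  have hmin : IsLocalMin (fun y => f y - g (φ y)) x := by
    filter_upwards [hle] with y hy
    linarith
  exact sub_eq_zero.mp (hmin.hasFDerivAt_eq_zero (hf.sub (hg.comp x hφ)))

namespace Matrix

variable {n : Type*} [Fintype n]

theorem IsHermitian.star_trace_mul {R : Type*} [CommSemiring R] [StarRing R]
    {A B : Matrix n n R} (hA : A.IsHermitian) (hB : B.IsHermitian) :
    star (A * B).trace = (A * B).trace := by
  rw [← trace_conjTranspose, conjTranspose_mul, hA.eq, hB.eq, trace_mul_comm]

theorem ext_iff_trace_mul_right_isHermitian {A B : Matrix n n ℂ} :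
    A = B ↔ ∀ M : Matrix n n ℂ, M.IsHermitian → (A * M).trace = (B * M).trace := by
  refine ⟨fun h _ _ => h ▸ rfl, fun h => ext_iff_trace_mul_right.mpr fun N => ?_⟩
  have hN := h _ (ℜ N).2
  have hN' := h _ (ℑ N).2
  rw [← realPart_add_I_smul_imaginaryPart N, mul_add, mul_add, mul_smul_comm, mul_smul_comm,
    trace_add, trace_add, trace_smul, trace_smul, hN, hN']

end Matrix

theorem gradient_eq_of_dpi_saturation_general
    {n : Type*} [Fintype n]
    (Λ Λstar : Matrix n n ℂ →ₗ[ℝ] Matrix n n ℂ)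
    (hΛherm : ∀ A : Matrix n n ℂ, A.IsHermitian → (Λ A).IsHermitian)
    (hadj : ∀ A B : Matrix n n ℂ, (Λstar A * B).trace = (A * Λ B).trace)
    (ρ σ : Matrix n n ℂ) (hρ : ρ.IsHermitian)
    (B : Matrix n n ℂ → Matrix n n ℂ → ℝ)
    -- (a) DPI in a neighborhood of (ρ, σ):
    (hDPI : ∃ ε > 0, ∀ M₁ M₂ : Matrix n n ℂ, M₁.IsHermitian → M₂.IsHermitian →
      ‖M₁‖ < ε → ‖M₂‖ < ε →
      B (ρ + M₁) (σ + M₂) ≥ B (Λ (ρ + M₁)) (Λ (σ + M₂)))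
    -- (b) Fréchet differentiability on the real vector space of Hermitian matrices,
    -- with derivatives given by trace against the Hermitian matrices G and G':
    (G G' : Matrix n n ℂ) (hG : G.IsHermitian) (hG' : G'.IsHermitian)
    (L₁ : (selfAdjoint.submodule ℝ (Matrix n n ℂ)) →L[ℝ] ℝ)
    (hL₁ : ∀ M : selfAdjoint.submodule ℝ (Matrix n n ℂ),
      L₁ M = ((G * (M : Matrix n n ℂ)).trace).re)
    (hB₁ : HasFDerivAt
      (fun X : selfAdjoint.submodule ℝ (Matrix n n ℂ) => B (X : Matrix n n ℂ) σ)
      L₁ ⟨ρ, hρ⟩)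
    (L₂ : (selfAdjoint.submodule ℝ (Matrix n n ℂ)) →L[ℝ] ℝ)
    (hL₂ : ∀ M : selfAdjoint.submodule ℝ (Matrix n n ℂ),
      L₂ M = ((G' * (M : Matrix n n ℂ)).trace).re)
    (hB₂ : HasFDerivAt
      (fun X : selfAdjoint.submodule ℝ (Matrix n n ℂ) => B (X : Matrix n n ℂ) (Λ σ))
      L₂ ⟨Λ ρ, hΛherm ρ hρ⟩)
    -- (c) saturation of the DPI at (ρ, σ):
    (hsat : B ρ σ = B (Λ ρ) (Λ σ)) :
    G = Λstar G' := by
  let ΛH := (Λ.restrict (p := selfAdjoint.submodule ℝ _) (q := selfAdjoint.submodule ℝ _)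
    hΛherm).toContinuousLinearMap
  obtain ⟨ε, hε, hdpi⟩ := hDPI
  have hle : ∀ᶠ X : selfAdjoint.submodule ℝ (Matrix n n ℂ) in 𝓝 ⟨ρ, hρ⟩,
      B (Λ (X : Matrix n n ℂ)) (Λ σ) ≤ B X σ := by
    filter_upwards [Metric.ball_mem_nhds _ hε] with X hX
    simpa using hdpi (X - ρ) 0 (X.2.sub hρ) isHermitian_zero (mem_ball_iff_norm.mp hX)
      (by simpa using hε)
  have hL : L₁ = L₂.comp ΛH := hB₁.eq_comp_of_eventually_le_of_eq hB₂ ΛH.hasFDerivAt hle hsat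
  refine ext_iff_trace_mul_right_isHermitian.mpr fun M hM => ?_
  calc (G * M).trace = ((G * M).trace.re : ℂ) :=
        (Complex.conj_eq_iff_re.mp (hG.star_trace_mul hM)).symm
    _ = ((G' * Λ M).trace.re : ℂ) := by
        rw [← hL₁ ⟨M, hM⟩, hL]
        exact congrArg _ (hL₂ (ΛH ⟨M, hM⟩))
    _ = (Λstar G' * M).trace := by
        rw [hadj, Complex.conj_eq_iff_re.mp (hG'.star_trace_mul (hΛherm M hM))]

/-- If the data processing inequality for a differentiable distinguishability
measure `B` holds in a neighborhood of `(ρ, σ)` and is saturated at `(ρ, σ)`, then the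
(Hilbert–Schmidt duals of the) Fréchet derivatives with respect to the first argument satisfy
`G = Λ*(G')`. -/
theorem gradient_eq_of_dpi_saturation
    {n : Type*} [Fintype n] [DecidableEq n] [Nonempty n]
    (Λ Λstar : Matrix n n ℂ →ₗ[ℝ] Matrix n n ℂ)
    (hΛherm : ∀ A : Matrix n n ℂ, A.IsHermitian → (Λ A).IsHermitian)
    (hadj : ∀ A B : Matrix n n ℂ, (Λstar A * B).trace = (A * Λ B).trace)
    (ρ σ : Matrix n n ℂ) (hρ : ρ.IsHermitian) (hσ : σ.IsHermitian)
    (B : Matrix n n ℂ → Matrix n n ℂ → ℝ)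
    -- (a) DPI in a neighborhood of (ρ, σ):
    (hDPI : ∃ ε > 0, ∀ M₁ M₂ : Matrix n n ℂ, M₁.IsHermitian → M₂.IsHermitian →
      ‖M₁‖ < ε → ‖M₂‖ < ε →
      B (ρ + M₁) (σ + M₂) ≥ B (Λ (ρ + M₁)) (Λ (σ + M₂)))
    -- (b) Fréchet differentiability on the real vector space of Hermitian matrices,
    -- with derivatives given by trace against the Hermitian matrices G and G':
    (G G' : Matrix n n ℂ) (hG : G.IsHermitian) (hG' : G'.IsHermitian)
    (L₁ : (selfAdjoint.submodule ℝ (Matrix n n ℂ)) →L[ℝ] ℝ)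
    (hL₁ : ∀ M : selfAdjoint.submodule ℝ (Matrix n n ℂ),
      L₁ M = ((G * (M : Matrix n n ℂ)).trace).re)
    (hB₁ : HasFDerivAt
      (fun X : selfAdjoint.submodule ℝ (Matrix n n ℂ) => B (X : Matrix n n ℂ) σ)
      L₁ ⟨ρ, hρ⟩)
    (L₂ : (selfAdjoint.submodule ℝ (Matrix n n ℂ)) →L[ℝ] ℝ)
    (hL₂ : ∀ M : selfAdjoint.submodule ℝ (Matrix n n ℂ),
      L₂ M = ((G' * (M : Matrix n n ℂ)).trace).re)
    (hB₂ : HasFDerivAt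
      (fun X : selfAdjoint.submodule ℝ (Matrix n n ℂ) => B (X : Matrix n n ℂ) (Λ σ))
      L₂ ⟨Λ ρ, hΛherm ρ hρ⟩)
    -- (c) saturation of the DPI at (ρ, σ):
    (hsat : B ρ σ = B (Λ ρ) (Λ σ)) :
    G = Λstar G' :=
  gradient_eq_of_dpi_saturation_general Λ Λstar hΛherm hadj ρ σ hρ B hDPI G G' hG hG' L₁ hL₁ hB₁ L₂
    hL₂ hB₂ hsat
end

section
/- Let ρ, σ be positive definite n×n complex matrices and M a Hermitian matrix. Then the real function t ↦ tr((ρ+tM)·log(ρ+tM)) − tr((ρ+tM)·log σ), defined for t in a neighborhood of 0 on which ρ+tM is positive definite, is differentiable at t = 0 with derivative tr((log ρ − log σ + I)·M), where I is the identity matrix. -/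
open Matrix
open scoped ComplexOrder

/-- The matrix logarithm of a Hermitian matrix, via the continuous functional calculus
(`log A = Σⱼ log(λⱼ) Πⱼ` in terms of the spectral decomposition `A = Σⱼ λⱼ Πⱼ`). -/
noncomputable def matLog {n : Type*} [Fintype n] [DecidableEq n]
    (A : Matrix n n ℂ) : Matrix n n ℂ :=
  cfc Real.log A

/-!
With `φ x = x log x`, the claim is that `t ↦ tr φ(ρ + tM)` has derivative `tr(φ'(ρ) M)` at `0`,
the term `tr((ρ + tM) log σ)` being affine in `t`. Klein's inequality
`tr φ(A) + tr(φ'(A)(B - A)) ≤ tr φ(B)`, applied to the pairs `(ρ, ρ + tM)` and `(ρ + tM, ρ)`,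
traps `tr φ(ρ + tM) - tr φ(ρ)` between `t · tr(φ'(ρ) M)` and `t · tr(φ'(ρ + tM) M)`, and the
latter tends to the former by continuity of the functional calculus in the matrix variable.
Klein's inequality itself is the scalar tangent-line inequality for `φ`, averaged with the
nonnegative weights `|⟨uᵢ, vⱼ⟩|²` of eigenbases `u` of `A` and `v` of `B`.
-/

open Filter Topology

lemma Real.mul_log_add_log_add_one_mul_sub_le {x y : ℝ} (hx : 0 < x) (hy : 0 < y) :
    x * log x + (log x + 1) * (y - x) ≤ y * log y := by
  have h := mul_le_mul_of_nonneg_left (Real.log_le_sub_one_of_pos (div_pos hx hy)) hy.le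
  rw [Real.log_div hx.ne' hy.ne', mul_sub, mul_sub, mul_div_cancel₀ _ hy.ne', mul_one] at h
  linarith

theorem hasDerivAt_of_tangent_bounds {F g : ℝ → ℝ} {x : ℝ} (hg : ContinuousAt g x)
    (hF : ∀ᶠ y in 𝓝 x, g x * (y - x) ≤ F y - F x ∧ F y - F x ≤ g y * (y - x)) :
    HasDerivAt F (g x) x := by
  rw [hasDerivAt_iff_isLittleO, Asymptotics.isLittleO_iff]
  intro c hc
  have hgc : ∀ᶠ y in 𝓝 x, |g y - g x| ≤ c := by
    filter_upwards [Metric.tendsto_nhds.mp hg c hc] with y hy using hy.le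
  filter_upwards [hF, hgc] with y ⟨hlow, hupp⟩ hy
  have herr : F y - F x - g x * (y - x) ≤ |g y - g x| * |y - x| := by
    rw [← abs_mul]
    linarith [le_abs_self ((g y - g x) * (y - x)), sub_mul (g y) (g x) (y - x)]
  rw [smul_eq_mul, mul_comm (y - x), Real.norm_eq_abs, Real.norm_eq_abs,
    abs_of_nonneg (by linarith)]
  exact herr.trans (mul_le_mul_of_nonneg_right hy (abs_nonneg _))

theorem exists_isCompact_eventually_spectrum_subset {X 𝕜 A : Type*} [NormedField 𝕜]
    [ProperSpace 𝕜] [NormedRing A] [NormedAlgebra 𝕜 A] [CompleteSpace A] {U : Set 𝕜}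
    (hU : IsOpen U) {a : X → A} {a₀ : A} {l : Filter X} (ha : Tendsto a l (𝓝 a₀))
    (ha₀ : spectrum 𝕜 a₀ ⊆ U) :
    ∃ K, IsCompact K ∧ K ⊆ U ∧ spectrum 𝕜 a₀ ⊆ K ∧ ∀ᶠ x in l, spectrum 𝕜 (a x) ⊆ K := by
  obtain ⟨K, hK, hsK, hKU⟩ := exists_compact_between (spectrum.isCompact a₀) hU ha₀
  refine ⟨K, hK, hKU, hsK.trans interior_subset, ?_⟩
  have hnear := (upperHemicontinuous_spectrum 𝕜 A).upperHemicontinuousAt a₀ _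
    (isOpen_interior.mem_nhdsSet.mpr hsK)
  exact (ha.eventually hnear).mono fun x hx => (subset_of_mem_nhdsSet hx).trans interior_subset

namespace Matrix

variable {n : Type*} [Fintype n] [DecidableEq n]

lemma trace_diagonal_mul_mul_diagonal_mul_conjTranspose (d e : n → ℂ) (W : Matrix n n ℂ) :
    (diagonal d * W * diagonal e * Wᴴ).trace
      = ∑ i, ∑ j, d i * e j * (Complex.normSq (W i j) : ℂ) := by
  refine Finset.sum_congr rfl fun i _ => ?_
  rw [diag_apply, mul_apply]
  refine Finset.sum_congr rfl fun j _ => ?_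
  rw [mul_diagonal, diagonal_mul, conjTranspose_apply, Complex.normSq_eq_conj_mul_self,
    Complex.star_def]
  ring

namespace IsHermitian

lemma exists_trace_cfc_mul_cfc_eq_sum {A B : Matrix n n ℂ} (hA : A.IsHermitian)
    (hB : B.IsHermitian) :
    ∃ w : n → n → ℝ, (∀ i j, 0 ≤ w i j) ∧ ∀ f g : ℝ → ℝ, (cfc f A * cfc g B).trace =
      ((∑ i, ∑ j, f (hA.eigenvalues i) * g (hB.eigenvalues j) * w i j : ℝ) : ℂ) := by
  set U : Matrix n n ℂ := (hA.eigenvectorUnitary : Matrix n n ℂ)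
  set V : Matrix n n ℂ := (hB.eigenvectorUnitary : Matrix n n ℂ)
  refine ⟨fun i j => Complex.normSq ((star U * V) i j), fun _ _ => Complex.normSq_nonneg _,
    fun f g => ?_⟩
  rw [hA.cfc_eq, hB.cfc_eq, IsHermitian.cfc, IsHermitian.cfc]
  simp only [Unitary.conjStarAlgAut_apply]
  have hW : (star U * V)ᴴ = star V * U := by
    rw [← star_eq_conjTranspose, star_mul, star_star]
  rw [show U * diagonal (RCLike.ofReal ∘ f ∘ hA.eigenvalues) * star U *
      (V * diagonal (RCLike.ofReal ∘ g ∘ hB.eigenvalues) * star V)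
      = U * (diagonal (RCLike.ofReal ∘ f ∘ hA.eigenvalues) * (star U * V) *
        diagonal (RCLike.ofReal ∘ g ∘ hB.eigenvalues) * star V) by
    simp only [mul_assoc], trace_mul_comm, mul_assoc _ (star V), ← hW,
    trace_diagonal_mul_mul_diagonal_mul_conjTranspose]
  push_cast
  rfl

theorem klein_inequality {A B : Matrix n n ℂ} (hA : A.IsHermitian) (hB : B.IsHermitian)
    {s : Set ℝ} {f g : ℝ → ℝ} (hAs : spectrum ℝ A ⊆ s) (hBs : spectrum ℝ B ⊆ s)
    (hfg : ∀ x ∈ s, ∀ y ∈ s, f x + g x * (y - x) ≤ f y) :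
    (cfc f A).trace.re + (cfc g A * (B - A)).trace.re ≤ (cfc f B).trace.re := by
  obtain ⟨w, hw, htr⟩ := hA.exists_trace_cfc_mul_cfc_eq_sum hB
  have hre (f g : ℝ → ℝ) : (cfc f A * cfc g B).trace.re
      = ∑ i, ∑ j, f (hA.eigenvalues i) * g (hB.eigenvalues j) * w i j := by
    rw [htr, Complex.ofReal_re]
  have hfA : cfc f A = cfc f A * cfc (fun _ : ℝ => (1 : ℝ)) B := by
    rw [cfc_const_one ℝ B, mul_one]
  have hfB : cfc f B = cfc (fun _ : ℝ => (1 : ℝ)) A * cfc f B := by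
    rw [cfc_const_one ℝ A, one_mul]
  have hgB : cfc g A * B = cfc g A * cfc (fun y : ℝ => y) B := by
    rw [cfc_id' ℝ B hB.isSelfAdjoint]
  have hgA : cfc g A * A = cfc (fun x => g x * x) A * cfc (fun _ : ℝ => (1 : ℝ)) B := by
    rw [cfc_const_one ℝ B, mul_one,
      cfc_mul g (fun x => x) A (A.finite_real_spectrum.continuousOn _), cfc_id' ℝ A hA.isSelfAdjoint]
  rw [mul_sub, trace_sub, Complex.sub_re, hgB, hgA, hfA, hfB, hre, hre, hre, hre,
    ← Finset.sum_sub_distrib, ← Finset.sum_add_distrib]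
  refine Finset.sum_le_sum fun i _ => ?_
  rw [← Finset.sum_sub_distrib, ← Finset.sum_add_distrib]
  refine Finset.sum_le_sum fun j _ => ?_
  have htangent := mul_le_mul_of_nonneg_right (hfg _ (hAs (hA.eigenvalues_mem_spectrum_real i))
    _ (hBs (hB.eigenvalues_mem_spectrum_real j))) (hw i j)
  linarith

open scoped Matrix.Norms.L2Operator in
theorem hasDerivAt_trace_cfc_add_smul {ρ M : Matrix n n ℂ} (hρ : ρ.IsHermitian)
    (hM : M.IsHermitian) {U : Set ℝ} (hU : IsOpen U) (hρU : spectrum ℝ ρ ⊆ U) {f g : ℝ → ℝ}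
    (hg : ContinuousOn g U) (hfg : ∀ x ∈ U, ∀ y ∈ U, f x + g x * (y - x) ≤ f y) :
    HasDerivAt (fun t : ℝ => (cfc f (ρ + t • M)).trace.re) ((cfc g ρ * M).trace.re) 0 := by
  set P : ℝ → Matrix n n ℂ := fun t => ρ + t • M
  have hP (t : ℝ) : (P t).IsHermitian := hρ.add (hM.smul (IsSelfAdjoint.all t))
  have hP0 : P 0 = ρ := by simp [P]
  have hPρ : Tendsto P (𝓝 0) (𝓝 ρ) := by
    rw [← hP0]
    exact (continuous_const.add (continuous_id.smul continuous_const)).tendsto 0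
  obtain ⟨K, hK, hKU, hρK, hPK⟩ := exists_isCompact_eventually_spectrum_subset hU hPρ hρU
  set G : ℝ → ℝ := fun t => (cfc g (P t) * M).trace.re
  have hG0 : G 0 = (cfc g ρ * M).trace.re := by simp [G, hP0]
  have hG : ContinuousAt G 0 := by
    rw [ContinuousAt, hG0]
    have hcfc := hPρ.cfc hK g hPK (.of_forall fun t => (hP t).isSelfAdjoint) hρK
      hρ.isSelfAdjoint (hg.mono hKU)
    exact (Complex.continuous_re.comp (continuous_id.matrix_mul continuous_const).matrix_trace
      |>.tendsto _).comp hcfc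
  rw [← hG0]
  refine hasDerivAt_of_tangent_bounds hG ?_
  filter_upwards [hPK] with t ht
  have hsub : P t - ρ = t • M := add_sub_cancel_left ρ (t • M)
  have klein₁ := klein_inequality hρ (hP t) (hρK.trans hKU) (ht.trans hKU) hfg
  have klein₂ := klein_inequality (hP t) hρ (ht.trans hKU) (hρK.trans hKU) hfg
  rw [hsub, mul_smul_comm, trace_smul, Complex.smul_re, smul_eq_mul] at klein₁
  rw [← neg_sub, hsub, mul_neg, mul_smul_comm, trace_neg, trace_smul, Complex.neg_re,
    Complex.smul_re, smul_eq_mul] at klein₂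
  simp only [G, hP0, sub_zero, P] at klein₁ klein₂ ⊢
  constructor <;> linarith

end IsHermitian

lemma hasDerivAt_trace_add_smul_mul (ρ M L : Matrix n n ℂ) :
    HasDerivAt (fun t : ℝ => ((ρ + t • M) * L).trace.re) ((M * L).trace.re) 0 := by
  have hfun : (fun t : ℝ => ((ρ + t • M) * L).trace.re)
      = fun t => (ρ * L).trace.re + t * (M * L).trace.re := by
    funext t
    rw [add_mul, trace_add, smul_mul_assoc, trace_smul, Complex.add_re, Complex.smul_re,
      smul_eq_mul]
  rw [hfun]
  exact (hasDerivAt_mul_const _).const_add _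

lemma PosDef.hasDerivAt_trace_add_smul_mul_matLog {ρ M : Matrix n n ℂ} (hρ : ρ.PosDef)
    (hM : M.IsHermitian) :
    HasDerivAt (fun t : ℝ => ((ρ + t • M) * matLog (ρ + t • M)).trace.re)
      (((matLog ρ + 1) * M).trace.re) 0 := by
  have hρpos : spectrum ℝ ρ ⊆ Set.Ioi 0 := by
    rw [hρ.1.spectrum_real_eq_range_eigenvalues]
    exact Set.range_subset_iff.mpr hρ.eigenvalues_pos
  have hmul (t : ℝ) : (ρ + t • M) * matLog (ρ + t • M)
      = cfc (fun x => x * Real.log x) (ρ + t • M) := by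
    have hP : (ρ + t • M).IsHermitian := hρ.1.add (hM.smul (IsSelfAdjoint.all t))
    rw [matLog, cfc_mul (fun x : ℝ => x) Real.log _ continuousOn_id
      ((ρ + t • M).finite_real_spectrum.continuousOn _), cfc_id' ℝ _ hP.isSelfAdjoint]
  have hderiv : matLog ρ + 1 = cfc (fun x => Real.log x + 1) ρ := by
    rw [matLog, cfc_add _ _ _ (ρ.finite_real_spectrum.continuousOn _),
      cfc_const_one ℝ ρ hρ.1.isSelfAdjoint]
  simp only [hmul, hderiv]
  exact hρ.1.hasDerivAt_trace_cfc_add_smul hM isOpen_Ioi hρpos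
    ((Real.continuousOn_log.mono fun x hx => ne_of_gt hx).add continuousOn_const)
    fun x hx y hy => Real.mul_log_add_log_add_one_mul_sub_le hx hy

end Matrix

theorem relEntropy_first_arg_deriv_general
    {n : Type*} [Fintype n] [DecidableEq n]
    (ρ σ M : Matrix n n ℂ) (hρ : ρ.PosDef) (hM : M.IsHermitian) :
    HasDerivAt
      (fun t : ℝ =>
        (((ρ + t • M) * matLog (ρ + t • M)).trace - ((ρ + t • M) * matLog σ).trace).re)
      (((matLog ρ - matLog σ + 1) * M).trace).re 0 := by
  have hval : ((matLog ρ - matLog σ + 1) * M).trace.re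
      = ((matLog ρ + 1) * M).trace.re - (M * matLog σ).trace.re := by
    rw [trace_mul_comm M, ← Complex.sub_re, ← trace_sub, ← sub_mul, sub_add_eq_add_sub]
  simp only [Complex.sub_re, hval]
  exact (hρ.hasDerivAt_trace_add_smul_mul_matLog hM).sub
    (hasDerivAt_trace_add_smul_mul ρ M (matLog σ))

/-- For positive definite `ρ, σ` and Hermitian `M`, the function
`t ↦ tr((ρ+tM)·log(ρ+tM)) − tr((ρ+tM)·log σ)` is differentiable at `t = 0` with derivative
`tr((log ρ − log σ + 1)·M)`. -/
theorem relEntropy_first_arg_deriv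
    {n : Type*} [Fintype n] [DecidableEq n] [Nonempty n]
    (ρ σ M : Matrix n n ℂ) (hρ : ρ.PosDef) (hσ : σ.PosDef) (hM : M.IsHermitian) :
    HasDerivAt
      (fun t : ℝ =>
        (((ρ + t • M) * matLog (ρ + t • M)).trace - ((ρ + t • M) * matLog σ).trace).re)
      (((matLog ρ - matLog σ + 1) * M).trace).re 0 :=
  relEntropy_first_arg_deriv_general ρ σ M hρ hM
end

section
/- Let Λ be an ℝ-linear map on n×n complex matrices and Λ* a trace adjoint of Λ. Let ρ, σ be positive definite matrices such that Λ(ρ) and Λ(σ) are positive definite. If log ρ − log σ = Λ*(log Λ(ρ) − log Λ(σ)), then D(ρ‖σ) = D(Λ(ρ)‖Λ(σ)). -/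
open Matrix
open scoped ComplexOrder

/-- The relative entropy `D(ρ‖σ) = tr(ρ log ρ) − tr(ρ log σ)` of positive definite matrices. -/
noncomputable def relEnt {n : Type*} [Fintype n] [DecidableEq n]
    (ρ σ : Matrix n n ℂ) : ℝ :=
  ((ρ * matLog ρ).trace - (ρ * matLog σ).trace).re

/-- The operator equation `log ρ − log σ = Λ*(log Λ(ρ) − log Λ(σ))` implies
saturation of the data processing inequality for the relative entropy. -/
theorem relEntropy_dpi_saturation_of_operator_eq
    {n : Type*} [Fintype n] [DecidableEq n] [Nonempty n]
    (Λ Λstar : Matrix n n ℂ →ₗ[ℝ] Matrix n n ℂ)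
    (hadj : ∀ A B : Matrix n n ℂ, (Λstar A * B).trace = (A * Λ B).trace)
    (ρ σ : Matrix n n ℂ) (hρ : ρ.PosDef) (hσ : σ.PosDef)
    (hΛρ : (Λ ρ).PosDef) (hΛσ : (Λ σ).PosDef)
    (hop : matLog ρ - matLog σ = Λstar (matLog (Λ ρ) - matLog (Λ σ))) :
    relEnt ρ σ = relEnt (Λ ρ) (Λ σ) := by
  unfold relEnt
  rw [show (ρ * matLog ρ).trace - (ρ * matLog σ).trace
      = (ρ * (matLog ρ - matLog σ)).trace by rw [mul_sub, trace_sub]]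
  rw [hop, trace_mul_comm, hadj, trace_mul_comm, mul_sub, trace_sub]
end

section
/- Let ρ be a positive semidefinite n×n complex matrix and M a Hermitian matrix. Then the following are equivalent: (i) xᴴ·M·y = 0 for all vectors x, y in the kernel of ρ (i.e., with ρ·x = 0 and ρ·y = 0); (ii) there exists an n×n complex matrix Δ such that M = Δ·ρ + ρ·Δᴴ. -/
open Matrix
open scoped ComplexOrder

/-!
Let `ρ⁺ = cfc (·⁻¹) ρ`; since `0⁻¹ = 0` and `ρ` has finite spectrum (so that `x ↦ x⁻¹` is continuous
on it), this is the generalized inverse of `ρ`, `P = ρ ρ⁺` is the projection onto the range of `ρ`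
and `Q = 1 - P` the projection onto its kernel. For `Δ = (1 - P/2) M ρ⁺` a ring computation gives
`M = Δ ρ + ρ Δᴴ + Q M Q`, and condition (i) says exactly that `Q M Q = 0`.
-/

theorem IsSelfAdjoint.mul_cfc_inv_mul_self {A : Type*} [Ring A] [StarRing A] [Algebra ℝ A]
    [TopologicalSpace A] [ContinuousFunctionalCalculus ℝ A IsSelfAdjoint] {a : A}
    (ha : IsSelfAdjoint a) (hs : (spectrum ℝ a).Finite) :
    a * cfc (·⁻¹ : ℝ → ℝ) a * a = a := by
  have hcont (f : ℝ → ℝ) : ContinuousOn f (spectrum ℝ a) := hs.continuousOn f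
  calc a * cfc (·⁻¹ : ℝ → ℝ) a * a = cfc id a * cfc (·⁻¹ : ℝ → ℝ) a * cfc id a := by
        rw [cfc_id ℝ a]
    _ = cfc (fun x : ℝ => x * x⁻¹ * x) a := by
        rw [← cfc_mul _ _ _ (hcont _) (hcont _), ← cfc_mul _ _ _ (hcont _) (hcont _)]
        rfl
    _ = a := by
        simp only [mul_inv_mul_cancel]
        exact cfc_id' ℝ a

theorem exists_eq_mul_add_mul_star_add_of_commute {A : Type*} [Ring A] [StarRing A]
    [Algebra ℝ A] [StarModule ℝ A] {a b m : A} (ha : IsSelfAdjoint a) (hb : IsSelfAdjoint b)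
    (hm : IsSelfAdjoint m) (hab : Commute a b) :
    ∃ Δ, m = Δ * a + a * star Δ + (1 - a * b) * m * (1 - a * b) := by
  refine ⟨m * b - (2⁻¹ : ℝ) • (a * b * m * b), ?_⟩
  have hba : b * a = a * b := hab.eq.symm
  simp only [star_sub, star_smul, star_mul, ha.star_eq, hb.star_eq, hm.star_eq, star_trivial]
  simp only [sub_mul, mul_sub, smul_mul_assoc, mul_smul_comm, mul_assoc, hba, one_mul, mul_one]
  module

section KernelForm

variable {n R : Type*} [Fintype n] [CommSemiring R] [StarRing R]

theorem Matrix.conjTranspose_mul_mul_eq_zero_of_kernel {ρ M K L : Matrix n n R}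
    (h : ∀ x y : n → R, ρ *ᵥ x = 0 → ρ *ᵥ y = 0 → star x ⬝ᵥ M *ᵥ y = 0)
    (hK : ρ * K = 0) (hL : ρ * L = 0) : Kᴴ * M * L = 0 := by
  have hcol {A : Matrix n n R} (hA : ρ * A = 0) (i : n) : ρ *ᵥ A.col i = 0 :=
    funext fun k => congrFun (congrFun hA k) i
  ext i j
  rw [Matrix.zero_apply, ← h _ _ (hcol hK i) (hcol hL j), dotProduct_mulVec]
  rfl

theorem Matrix.IsHermitian.dotProduct_mul_add_mul_conjTranspose_mulVec_eq_zero
    {ρ : Matrix n n R} (hρ : ρ.IsHermitian) (Δ : Matrix n n R) {x y : n → R}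
    (hx : ρ *ᵥ x = 0) (hy : ρ *ᵥ y = 0) :
    star x ⬝ᵥ (Δ * ρ + ρ * Δᴴ) *ᵥ y = 0 := by
  rw [add_mulVec, ← mulVec_mulVec, ← mulVec_mulVec, hy, mulVec_zero, zero_add, dotProduct_mulVec,
    ← hρ.eq, ← star_mulVec, hx, star_zero, zero_dotProduct]

end KernelForm

theorem kernel_orthogonal_iff_tangent_form_general
    {n : Type*} [Fintype n] [DecidableEq n]
    (ρ M : Matrix n n ℂ) (hρ : ρ.PosSemidef) (hM : M.IsHermitian) :
    (∀ x y : n → ℂ, ρ.mulVec x = 0 → ρ.mulVec y = 0 → star x ⬝ᵥ M.mulVec y = 0)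
      ↔ ∃ Δ : Matrix n n ℂ, M = Δ * ρ + ρ * Δᴴ := by
  have hρ' : IsSelfAdjoint ρ := hρ.isHermitian.isSelfAdjoint
  constructor
  · intro h
    set ρinv := cfc (·⁻¹ : ℝ → ℝ) ρ
    have hinv : IsSelfAdjoint ρinv := cfc_predicate _ _
    have hcomm : Commute ρ ρinv := (Commute.cfc_real (Commute.refl ρ) _).symm
    have hQ : IsSelfAdjoint (1 - ρ * ρinv) :=
      (IsSelfAdjoint.one _).sub ((hρ'.commute_iff hinv).mp hcomm)
    have hρQ : ρ * (1 - ρ * ρinv) = 0 := by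
      rw [mul_sub, mul_one, hcomm.eq, ← mul_assoc,
        hρ'.mul_cfc_inv_mul_self ρ.finite_real_spectrum, sub_self]
    obtain ⟨Δ, hΔ⟩ := exists_eq_mul_add_mul_star_add_of_commute hρ' hinv hM.isSelfAdjoint hcomm
    have hQMQ := conjTranspose_mul_mul_eq_zero_of_kernel h hρQ hρQ
    rw [hQ.isHermitian.eq] at hQMQ
    exact ⟨Δ, by rwa [hQMQ, add_zero] at hΔ⟩
  · rintro ⟨Δ, rfl⟩ x y hx hy
    exact hρ.isHermitian.dotProduct_mul_add_mul_conjTranspose_mulVec_eq_zero Δ hx hy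

/-- For a positive semidefinite `ρ` and Hermitian `M`, the following are
equivalent: (i) `xᴴ M y = 0` for all `x, y` in the kernel of `ρ`; (ii) `M = Δρ + ρΔᴴ` for
some matrix `Δ`. -/
theorem kernel_orthogonal_iff_tangent_form
    {n : Type*} [Fintype n] [DecidableEq n] [Nonempty n]
    (ρ M : Matrix n n ℂ) (hρ : ρ.PosSemidef) (hM : M.IsHermitian) :
    (∀ x y : n → ℂ, ρ.mulVec x = 0 → ρ.mulVec y = 0 → star x ⬝ᵥ M.mulVec y = 0)
      ↔ ∃ Δ : Matrix n n ℂ, M = Δ * ρ + ρ * Δᴴ :=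
  kernel_orthogonal_iff_tangent_form_general ρ M hρ hM
end
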